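/- Let h ∈ ℂ[X,Y] be an irreducible bivariate polynomial such that there exist no μ ∈ ℂ and r ∈ ℝ[X,Y] with h equal to μ times the image of r under the coefficient embedding ℝ → ℂ. Then the set of real zeros of h, i.e., {(x,y) ∈ ℝ² : h(x,y) = 0}, is finite with at most deg(h)² elements. -/

import Mathlib

/-!
Write `h = p + i q` with `p, q ∈ ℝ[X,Y]`: the real zeros of `h` are the common real zeros of
`p` and `q`. Both are nonzero, and they are coprime because a common real factor would divide the
irreducible `h`, making `h` a complex multiple of a real polynomial. It remains to bound the number
`s` of common zeros of coprime `p, q` of degrees `m, n` by `m n` (weak Bézout). Let `V_k` be the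
polynomials of degree `≤ k`, of dimension `(k+1)(k+2)/2`, and `d = m + n + s`. Evaluation at the
`s` points maps `V_d` onto `ℝ^s` (Lagrange interpolation by products of linear forms), and its
kernel contains `p V_{n+s} + q V_{m+s}`, while by coprimality `p V_{n+s} ∩ q V_{m+s} ⊆ p q V_s`.
Comparing dimensions leaves exactly `s ≤ m n`.
-/

open MvPolynomial Finset Module

theorem Set.finite_and_ncard_le_of_forall_finset_card_le {α : Type*} {s : Set α} {n : ℕ}
    (h : ∀ t : Finset α, ↑t ⊆ s → #t ≤ n) : s.Finite ∧ s.ncard ≤ n := by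
  have hs : s.Finite := by
    by_contra hinf
    obtain ⟨t, hts, hcard⟩ := Set.Infinite.exists_subset_card_eq hinf (n + 1)
    have := h t hts
    omega
  exact ⟨hs, Set.ncard_eq_toFinset_card s hs ▸ h _ (by simp)⟩

theorem two_mul_card_filter_add_le (d : ℕ) :
    2 * #{ab ∈ range (d + 1) ×ˢ range (d + 1) | ab.1 + ab.2 ≤ d} = (d + 1) * (d + 2) := by
  induction d with
  | zero => rfl
  | succ d ih =>
    have hsplit : {ab ∈ range (d + 2) ×ˢ range (d + 2) | ab.1 + ab.2 ≤ d + 1} =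
        {ab ∈ range (d + 1) ×ˢ range (d + 1) | ab.1 + ab.2 ≤ d} ∪ antidiagonal (d + 1) := by
      ext ⟨a, b⟩
      simp only [mem_filter, mem_product, mem_range, mem_union, HasAntidiagonal.mem_antidiagonal]
      omega
    have hdisj : Disjoint {ab ∈ range (d + 1) ×ˢ range (d + 1) | ab.1 + ab.2 ≤ d}
        (antidiagonal (d + 1)) := by
      simp only [disjoint_left, mem_filter, HasAntidiagonal.mem_antidiagonal]
      omega
    rw [hsplit, card_union_of_disjoint hdisj, Nat.card_antidiagonal]
    linarith

theorem Submodule.finrank_map_mulLeft {R A : Type*} [CommRing R] [Ring A] [NoZeroDivisors A]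
    [Algebra R A] {a : A} (ha : a ≠ 0) (V : Submodule R A) :
    finrank R (V.map (LinearMap.mulLeft R a)) = finrank R V :=
  (Submodule.equivMapOfInjective _ (mul_right_injective₀ ha) V).finrank_eq.symm

namespace MvPolynomial

variable {σ : Type*}

section Multiples

variable {R : Type*}

theorem two_mul_finrank_restrictTotalDegree_fin_two [CommRing R] [Nontrivial R] (d : ℕ) :
    2 * finrank R (restrictTotalDegree (Fin 2) R d) = (d + 1) * (d + 2) := by
  rw [restrictTotalDegree, finrank_eq_nat_card_basis (basisRestrictSupport R _),
    ← two_mul_card_filter_add_le d, ← Nat.card_eq_finsetCard]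
  congr 1
  refine Nat.card_congr (Equiv.subtypeEquiv
    (Finsupp.equivFunOnFinite.trans (finTwoArrowEquiv ℕ)) fun n => ?_)
  simp [Finsupp.sum_fintype]
  omega

theorem map_mulLeft_restrictTotalDegree_le [CommSemiring R] {p : MvPolynomial σ R} {k d : ℕ}
    (hd : p.totalDegree + k ≤ d) :
    (restrictTotalDegree σ R k).map (LinearMap.mulLeft R p) ≤ restrictTotalDegree σ R d := by
  rintro _ ⟨A, hA, rfl⟩
  rw [SetLike.mem_coe, mem_restrictTotalDegree] at hA
  rw [mem_restrictTotalDegree]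
  exact (totalDegree_mul p A).trans (by omega)

theorem map_mulLeft_inf_map_mulLeft_le [CommRing R] [IsDomain R] [UniqueFactorizationMonoid R]
    {p q : MvPolynomial σ R} (hpq : IsRelPrime p q) (k : ℕ) :
    (restrictTotalDegree σ R (q.totalDegree + k)).map (LinearMap.mulLeft R p) ⊓
        (restrictTotalDegree σ R (p.totalDegree + k)).map (LinearMap.mulLeft R q) ≤
      (restrictTotalDegree σ R k).map (LinearMap.mulLeft R (p * q)) := by
  rintro _ ⟨⟨A, hA, rfl⟩, ⟨B, -, hBA⟩⟩
  simp only [SetLike.mem_coe, mem_restrictTotalDegree, LinearMap.mulLeft_apply] at hA hBA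
  obtain ⟨C, rfl⟩ : q ∣ A := hpq.symm.dvd_of_dvd_mul_left ⟨B, hBA.symm⟩
  rcases eq_or_ne (q * C) 0 with h0 | h0
  · exact ⟨0, zero_mem _, by simp [h0]⟩
  refine ⟨C, ?_, mul_assoc p q C⟩
  rw [totalDegree_mul_of_isDomain (left_ne_zero_of_mul h0) (right_ne_zero_of_mul h0)] at hA
  rw [SetLike.mem_coe, mem_restrictTotalDegree]
  omega

end Multiples

section Interpolation

variable {R : Type*} [CommRing R]

theorem exists_totalDegree_le_one_eval_ne_zero_eval_eq_zero {x y : σ → R} (hxy : x ≠ y) :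
    ∃ L : MvPolynomial σ R, L.totalDegree ≤ 1 ∧ eval x L ≠ 0 ∧ eval y L = 0 := by
  obtain ⟨i, hi⟩ := Function.ne_iff.mp hxy
  refine ⟨X i - C (y i), (totalDegree_sub_C_le _ _).trans ?_, by simpa [sub_eq_zero], by simp⟩
  exact (totalDegree_monomial_le (Finsupp.single i 1) (1 : R)).trans_eq (by simp)

theorem exists_totalDegree_le_card_eval_ne_zero_eval_eq_zero [IsDomain R]
    {u : Finset (σ → R)} {x : σ → R} (hx : x ∉ u) :
    ∃ f : MvPolynomial σ R, f.totalDegree ≤ #u ∧ eval x f ≠ 0 ∧ ∀ y ∈ u, eval y f = 0 := by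
  choose! L hLdeg hLx hLy using fun y (hy : y ∈ u) =>
    exists_totalDegree_le_one_eval_ne_zero_eval_eq_zero (x := x) fun h => hx (h ▸ hy)
  refine ⟨∏ y ∈ u, L y, ?_, ?_, fun y hy => ?_⟩
  · calc (∏ y ∈ u, L y).totalDegree ≤ ∑ y ∈ u, (L y).totalDegree :=
          totalDegree_finsetProd _ _
      _ ≤ #u • 1 := sum_le_card_nsmul _ _ _ hLdeg
      _ = #u := by rw [smul_eq_mul, mul_one]
  · rw [map_prod, prod_ne_zero_iff]
    exact hLx
  · rw [map_prod]
    exact prod_eq_zero hy (hLy y hy)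

end Interpolation

section Evaluation

variable {K : Type*} [Field K]

noncomputable def evalOn (t : Finset (σ → K)) : MvPolynomial σ K →ₗ[K] t → K :=
  LinearMap.funLeft K K ((↑) : t → σ → K) ∘ₗ evalₗ K σ

@[simp]
theorem evalOn_apply (t : Finset (σ → K)) (f : MvPolynomial σ K) (x : t) :
    evalOn t f x = eval (x : σ → K) f :=
  rfl

theorem map_evalOn_restrictTotalDegree_eq_top {t : Finset (σ → K)} {d : ℕ}
    (ht : #t ≤ d + 1) :
    (restrictTotalDegree σ K d).map (evalOn t) = ⊤ := by
  classical
  have hbasis : ∀ x ∈ t, ∃ f ∈ restrictTotalDegree σ K d,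
      eval x f = 1 ∧ ∀ y ∈ t, y ≠ x → eval y f = 0 := by
    intro x hx
    obtain ⟨f, hfdeg, hfx, hfy⟩ :=
      exists_totalDegree_le_card_eval_ne_zero_eval_eq_zero (notMem_erase x t)
    refine ⟨C (eval x f)⁻¹ * f, ?_, by simp [hfx], fun y hy hyx => ?_⟩
    · rw [mem_restrictTotalDegree, card_erase_of_mem hx] at *
      exact (totalDegree_mul _ _).trans (by simp; omega)
    · simp [hfy y (mem_erase.mpr ⟨hyx, hy⟩)]
  choose! lagrange hmem hself hother using hbasis
  refine eq_top_iff.mpr fun g _ => ⟨∑ x : t, g x • lagrange x, ?_, ?_⟩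
  · exact sum_mem fun x _ => Submodule.smul_mem _ _ (hmem x x.2)
  · ext y
    rw [map_sum, Finset.sum_apply, sum_eq_single y]
    · simp [hself y y.2]
    · intro x _ hxy
      simp [hother x x.2 y y.2 fun h => hxy (Subtype.ext h).symm]
    · simp

theorem finrank_add_card_le_finrank_restrictTotalDegree [Finite σ] {t : Finset (σ → K)}
    {d : ℕ} (ht : #t ≤ d + 1)
    {U : Submodule K (MvPolynomial σ K)} (hUd : U ≤ restrictTotalDegree σ K d)
    (hUt : U ≤ LinearMap.ker (evalOn t)) :
    finrank K U + #t ≤ finrank K (restrictTotalDegree σ K d) := by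
  set V := restrictTotalDegree σ K d
  have hrange : LinearMap.range ((evalOn t).domRestrict V) = ⊤ := by
    rw [LinearMap.range_domRestrict, map_evalOn_restrictTotalDegree_eq_top ht]
  have hker : finrank K U ≤ finrank K (LinearMap.ker ((evalOn t).domRestrict V)) := by
    rw [← (Submodule.comapSubtypeEquivOfLe hUd).finrank_eq, LinearMap.ker_domRestrict]
    exact Submodule.finrank_mono (Submodule.comap_mono hUt)
  have := LinearMap.finrank_range_add_finrank_ker ((evalOn t).domRestrict V)
  rw [hrange, finrank_top, finrank_fintype_fun_eq_card, Fintype.card_coe] at this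
  omega

theorem card_le_totalDegree_mul_of_isRelPrime {p q : MvPolynomial (Fin 2) K} (hp : p ≠ 0)
    (hq : q ≠ 0) (hpq : IsRelPrime p q) {t : Finset (Fin 2 → K)}
    (ht : ∀ x ∈ t, eval x p = 0 ∧ eval x q = 0) :
    #t ≤ p.totalDegree * q.totalDegree := by
  set m := p.totalDegree
  set n := q.totalDegree
  set s := #t
  set P := (restrictTotalDegree (Fin 2) K (n + s)).map (LinearMap.mulLeft K p)
  set Q := (restrictTotalDegree (Fin 2) K (m + s)).map (LinearMap.mulLeft K q)
  have hPQ : P ⊔ Q ≤ restrictTotalDegree (Fin 2) K (m + n + s) :=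
    sup_le (map_mulLeft_restrictTotalDegree_le (by omega))
      (map_mulLeft_restrictTotalDegree_le (by omega))
  have hPQt : P ⊔ Q ≤ LinearMap.ker (evalOn t) := by
    refine sup_le ?_ ?_ <;> rintro _ ⟨A, -, rfl⟩ <;> ext x <;> simp [(ht x x.2).1, (ht x x.2).2]
  have hsup := finrank_add_card_le_finrank_restrictTotalDegree (by omega) hPQ hPQt
  have hinf := Submodule.finrank_mono (map_mulLeft_inf_map_mulLeft_le hpq s)
  have hsum := Submodule.finrank_sup_add_finrank_inf_eq P Q
  rw [Submodule.finrank_map_mulLeft hp, Submodule.finrank_map_mulLeft hq] at hsum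
  rw [Submodule.finrank_map_mulLeft (mul_ne_zero hp hq)] at hinf
  -- `N k := finrank K (restrictTotalDegree (Fin 2) K k)` satisfies
  -- `N (m + n + s) - N (n + s) - N (m + s) + N s = m * n`
  have := two_mul_finrank_restrictTotalDegree_fin_two (R := K) (m + n + s)
  have := two_mul_finrank_restrictTotalDegree_fin_two (R := K) (n + s)
  have := two_mul_finrank_restrictTotalDegree_fin_two (R := K) (m + s)
  have := two_mul_finrank_restrictTotalDegree_fin_two (R := K) s
  linarith

end Evaluation

section RealImaginaryParts

theorem isUnit_of_isUnit_map {K S : Type*} [Field K] [CommRing S] [IsReduced S] [Nontrivial S]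
    (f : K →+* S) {e : MvPolynomial σ K} (he : IsUnit (map f e)) : IsUnit e := by
  rw [isUnit_iff_totalDegree_of_isReduced] at he ⊢
  obtain ⟨hc, hd⟩ := he
  rw [coeff_map] at hc
  refine ⟨isUnit_iff_ne_zero.mpr fun h0 => by simp [h0] at hc, ?_⟩
  rwa [totalDegree, support_map_of_injective _ f.injective] at hd

noncomputable def rePart (h : MvPolynomial σ ℂ) : MvPolynomial σ ℝ :=
  AddMonoidAlgebra.map Complex.reAddGroupHom h

noncomputable def imPart (h : MvPolynomial σ ℂ) : MvPolynomial σ ℝ :=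
  AddMonoidAlgebra.map Complex.imAddGroupHom h

@[simp]
theorem coeff_rePart (h : MvPolynomial σ ℂ) (m : σ →₀ ℕ) :
    (rePart h).coeff m = (h.coeff m).re :=
  rfl

@[simp]
theorem coeff_imPart (h : MvPolynomial σ ℂ) (m : σ →₀ ℕ) :
    (imPart h).coeff m = (h.coeff m).im :=
  rfl

theorem map_rePart_add_C_I_mul_map_imPart (h : MvPolynomial σ ℂ) :
    (rePart h).map (algebraMap ℝ ℂ) + C Complex.I * (imPart h).map (algebraMap ℝ ℂ) =
      h := by
  ext m
  simp [coeff_map, mul_comm Complex.I, Complex.re_add_im]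

theorem totalDegree_rePart_le (h : MvPolynomial σ ℂ) :
    (rePart h).totalDegree ≤ h.totalDegree :=
  sup_mono fun m hm => by
    rw [mem_support_iff, coeff_rePart] at hm
    exact mem_support_iff.mpr fun h0 => hm (by simp [h0])

theorem totalDegree_imPart_le (h : MvPolynomial σ ℂ) :
    (imPart h).totalDegree ≤ h.totalDegree :=
  sup_mono fun m hm => by
    rw [mem_support_iff, coeff_imPart] at hm
    exact mem_support_iff.mpr fun h0 => hm (by simp [h0])

theorem eval_map_ofReal (r : MvPolynomial σ ℝ) (x : σ → ℝ) :
    eval (fun i => (x i : ℂ)) (r.map (algebraMap ℝ ℂ)) = eval x r := by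
  rw [eval_map]
  exact (eval₂_comp (algebraMap ℝ ℂ) x r).symm

theorem eval_ofReal_eq_zero_iff (h : MvPolynomial σ ℂ) (x : σ → ℝ) :
    eval (fun i => (x i : ℂ)) h = 0 ↔ eval x (rePart h) = 0 ∧ eval x (imPart h) = 0 := by
  conv_lhs => rw [← map_rePart_add_C_I_mul_map_imPart h]
  rw [map_add, map_mul, eval_map_ofReal, eval_map_ofReal, eval_C, Complex.ext_iff]
  simp

theorem isRelPrime_rePart_imPart {h : MvPolynomial σ ℂ} (hirr : Irreducible h)
    (hnotreal : ¬ ∃ (μ : ℂ) (r : MvPolynomial σ ℝ),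
      h = C μ * r.map (algebraMap ℝ ℂ)) :
    IsRelPrime (rePart h) (imPart h) := by
  intro e hre him
  obtain ⟨k, hk⟩ : e.map (algebraMap ℝ ℂ) ∣ h := by
    rw [← map_rePart_add_C_I_mul_map_imPart h]
    exact dvd_add (map_dvd _ hre) (dvd_mul_of_dvd_right (map_dvd _ him) _)
  rcases hirr.isUnit_or_isUnit hk with he | hk'
  · exact isUnit_of_isUnit_map _ he
  · obtain ⟨c, -, rfl⟩ := isUnit_iff_eq_C_of_isReduced.mp hk'
    exact absurd ⟨c, e, by rw [hk, mul_comm]⟩ hnotreal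

end RealImaginaryParts

end MvPolynomial

/-- If `h ∈ ℂ[X,Y]` is irreducible and is not a scalar multiple `μ·r` of a polynomial
`r ∈ ℝ[X,Y]` with real coefficients, then `h` has at most `deg(h)²` real zeros. -/
theorem real_zeros_of_truly_complex_irreducible_finite
    (h : MvPolynomial (Fin 2) ℂ) (hirr : Irreducible h)
    (hnotreal : ¬ ∃ (μ : ℂ) (r : MvPolynomial (Fin 2) ℝ),
      h = C μ * r.map (algebraMap ℝ ℂ)) :
    {p : ℝ × ℝ | eval ![(p.1 : ℂ), (p.2 : ℂ)] h = 0}.Finite ∧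
      {p : ℝ × ℝ | eval ![(p.1 : ℂ), (p.2 : ℂ)] h = 0}.ncard ≤ h.totalDegree ^ 2 := by
  have hdecomp := map_rePart_add_C_I_mul_map_imPart h
  have hre : rePart h ≠ 0 := fun h0 =>
    hnotreal ⟨Complex.I, imPart h, hdecomp.symm.trans (by simp [h0])⟩
  have him : imPart h ≠ 0 := fun h0 =>
    hnotreal ⟨1, rePart h, hdecomp.symm.trans (by simp [h0])⟩
  obtain ⟨hfin, hcard⟩ := Set.finite_and_ncard_le_of_forall_finset_card_le fun t ht =>
    card_le_totalDegree_mul_of_isRelPrime hre him (isRelPrime_rePart_imPart hirr hnotreal)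
      fun x hx => ht hx
  have hzeros : {p : ℝ × ℝ | eval ![(p.1 : ℂ), (p.2 : ℂ)] h = 0} =
      (finTwoArrowEquiv ℝ).symm ⁻¹' {x | eval x (rePart h) = 0 ∧ eval x (imPart h) = 0} := by
    ext p
    have hpt : ![(p.1 : ℂ), (p.2 : ℂ)] = fun i => ((![p.1, p.2] i : ℝ) : ℂ) := by
      funext i; fin_cases i <;> rfl
    simp [hpt, eval_ofReal_eq_zero_iff]
  rw [hzeros, Set.ncard_preimage_of_injective_subset_range (Equiv.injective _)
    (Equiv.range_eq_univ _ ▸ Set.subset_univ _)]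
  refine ⟨hfin.preimage (Equiv.injective _).injOn, hcard.trans ?_⟩
  rw [sq]
  exact Nat.mul_le_mul (totalDegree_rePart_le h) (totalDegree_imPart_le h)
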